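/- arXiv:math/0507017 — 4 statements merged into one kernel-verified Lean document; each statement's English description precedes it below -/
import Mathlib

section
/- Let l_1,...,l_N be positive reals, let u_1,...,u_N, v_1,...,v_N be nonnegative reals with ∑_{k=1}^N (u_k+v_k)=1. Suppose continuous functions X_1, X_2 : ℝ → ℝ are nonnegative and continuous functions Z_1, Z_2 : ℝ → ℝ satisfy Z_j(t) = X_j(t) + ∑_{k=1}^N (u_k Z_j(t-l_k) + v_k Z_{3-j}(t-l_k)) for all t, and Z_j(t) → 0 as t → -∞. Then Z_1 and Z_2 are nonnegative on ℝ. -/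
/-!
Let `g = min Z₁ Z₂`. If `g` were negative somewhere, then, since `g → 0` at `-∞`, it would attain
a negative minimum `m` on a half-line `(-∞, t₀]`. At a point `s` where `g s = m`, say `Z₁ s = m`,
the renewal equation writes `m` as a nonnegative term plus a convex combination of delayed
values of `Z₁, Z₂`, all `≥ m`; so one of them equals `m`, i.e. `g (s - l k) = m` for some `k`.
Iterating, `g = m` at points tending to `-∞`, contradicting `g → 0`.
-/

open Filter Set Topology

theorem exists_min_eq_of_eq_add_sum {ι : Type*} {s : Finset ι} {u v a b : ι → ℝ} {x m : ℝ}
    (hu : ∀ i ∈ s, 0 ≤ u i) (hv : ∀ i ∈ s, 0 ≤ v i) (hsum : ∑ i ∈ s, (u i + v i) = 1)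
    (hx : 0 ≤ x) (hm : m = x + ∑ i ∈ s, (u i * a i + v i * b i))
    (hle : ∀ i ∈ s, m ≤ min (a i) (b i)) :
    ∃ i ∈ s, min (a i) (b i) = m := by
  by_contra! hne
  have hlt : ∀ i ∈ s, m < a i ∧ m < b i := fun i hi =>
    lt_min_iff.1 ((hle i hi).lt_of_ne (hne i hi).symm)
  have hterm : ∀ i ∈ s, 0 ≤ u i * (a i - m) + v i * (b i - m) := fun i hi =>
    add_nonneg (mul_nonneg (hu i hi) (sub_pos.2 (hlt i hi).1).le)
      (mul_nonneg (hv i hi) (sub_pos.2 (hlt i hi).2).le)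
  -- since the weights sum to `1`, the excess of the combination over `m` is `-x ≤ 0`
  have hexcess : ∑ i ∈ s, (u i * (a i - m) + v i * (b i - m)) = -x := by
    have hsplit : ∑ i ∈ s, (u i * (a i - m) + v i * (b i - m))
        = ∑ i ∈ s, (u i * a i + v i * b i) - (∑ i ∈ s, (u i + v i)) * m := by
      rw [Finset.sum_mul, ← Finset.sum_sub_distrib]
      exact Finset.sum_congr rfl fun _ _ => by ring
    rw [hsplit, hsum]
    linarith
  have hzero := (Finset.sum_eq_zero_iff_of_nonneg hterm).1
    (le_antisymm (hexcess ▸ neg_nonpos.2 hx) (Finset.sum_nonneg hterm))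
  have hweights : ∑ i ∈ s, (u i + v i) = 0 := Finset.sum_eq_zero fun i hi => by
    have h := hzero i hi
    rw [add_eq_zero_iff_of_nonneg (mul_nonneg (hu i hi) (sub_pos.2 (hlt i hi).1).le)
      (mul_nonneg (hv i hi) (sub_pos.2 (hlt i hi).2).le)] at h
    rw [(mul_eq_zero_iff_right (sub_pos.2 (hlt i hi).1).ne').1 h.1,
      (mul_eq_zero_iff_right (sub_pos.2 (hlt i hi).2).ne').1 h.2, add_zero]
  exact one_ne_zero (hsum.symm.trans hweights)

theorem Continuous.exists_isMinOn_Iic {f : ℝ → ℝ} (hf : Continuous f) {L : ℝ}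
    (hlim : Tendsto f atBot (𝓝 L)) {t₀ : ℝ} (ht₀ : f t₀ < L) :
    ∃ s ∈ Iic t₀, IsMinOn f (Iic t₀) s := by
  refine hf.continuousOn.exists_isMinOn' isClosed_Iic self_mem_Iic ?_
  rw [cocompact_eq_atBot_atTop, inf_sup_right, eventually_sup]
  constructor
  · exact (hlim.eventually (lt_mem_nhds ht₀)).filter_mono inf_le_left |>.mono fun _ h => h.le
  · exact mem_inf_of_inter (Ioi_mem_atTop t₀) (mem_principal_self _)
      fun _ h => (lt_irrefl t₀ (h.1.trans_le h.2)).elim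

theorem frequently_atBot_of_forall_exists_le_sub {P : ℝ → Prop} {ε : ℝ} (hε : 0 < ε)
    (hstep : ∀ s, P s → ∃ s' ≤ s - ε, P s') {s₀ : ℝ} (h₀ : P s₀) :
    ∃ᶠ s in atBot, P s := by
  have hiter : ∀ n : ℕ, ∃ s ≤ s₀ - n * ε, P s := by
    intro n
    induction n with
    | zero => exact ⟨s₀, by simp, h₀⟩
    | succ n ih =>
      obtain ⟨s, hs, hPs⟩ := ih
      obtain ⟨s', hs', hPs'⟩ := hstep s hPs
      exact ⟨s', by push_cast; linarith, hPs'⟩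
  refine frequently_atBot.2 fun T => ?_
  obtain ⟨n, hn⟩ := exists_nat_gt ((s₀ - T) / ε)
  obtain ⟨s, hs, hPs⟩ := hiter n
  exact ⟨s, by rw [div_lt_iff₀ hε] at hn; linarith, hPs⟩

theorem renewal_exists_delay_min_eq {N : ℕ} {l u v : ℕ → ℝ}
    (hl : ∀ k ∈ Finset.Icc 1 N, 0 < l k) (hu : ∀ k, 0 ≤ u k) (hv : ∀ k, 0 ≤ v k)
    (hsum : ∑ k ∈ Finset.Icc 1 N, (u k + v k) = 1) {X₁ X₂ Z₁ Z₂ : ℝ → ℝ}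
    (hX₁ : ∀ t, 0 ≤ X₁ t) (hX₂ : ∀ t, 0 ≤ X₂ t)
    (heq₁ : ∀ t, Z₁ t = X₁ t + ∑ k ∈ Finset.Icc 1 N,
      (u k * Z₁ (t - l k) + v k * Z₂ (t - l k)))
    (heq₂ : ∀ t, Z₂ t = X₂ t + ∑ k ∈ Finset.Icc 1 N,
      (u k * Z₂ (t - l k) + v k * Z₁ (t - l k)))
    {t₀ s : ℝ} (hmin : ∀ t ≤ t₀, min (Z₁ s) (Z₂ s) ≤ min (Z₁ t) (Z₂ t)) (hs : s ≤ t₀) :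
    ∃ k ∈ Finset.Icc 1 N, min (Z₁ (s - l k)) (Z₂ (s - l k)) = min (Z₁ s) (Z₂ s) := by
  have hle : ∀ k ∈ Finset.Icc 1 N, min (Z₁ s) (Z₂ s) ≤ min (Z₁ (s - l k)) (Z₂ (s - l k)) :=
    fun k hk => hmin _ (by linarith [hl k hk])
  rcases min_choice (Z₁ s) (Z₂ s) with h | h
  · rw [h] at hle ⊢
    exact exists_min_eq_of_eq_add_sum (fun k _ => hu k) (fun k _ => hv k) hsum (hX₁ s)
      (heq₁ s) hle
  · rw [h] at hle ⊢
    simp only [min_comm (Z₁ _)] at hle ⊢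
    exact exists_min_eq_of_eq_add_sum (fun k _ => hu k) (fun k _ => hv k) hsum (hX₂ s)
      (heq₂ s) hle

theorem stmt_3_general (N : ℕ) (l u v : ℕ → ℝ)
    (hl : ∀ k ∈ Finset.Icc 1 N, 0 < l k)
    (hu : ∀ k, 0 ≤ u k) (hv : ∀ k, 0 ≤ v k)
    (hsum : ∑ k ∈ Finset.Icc 1 N, (u k + v k) = 1)
    (X₁ X₂ Z₁ Z₂ : ℝ → ℝ)
    (hX₁ : ∀ t, 0 ≤ X₁ t) (hX₂ : ∀ t, 0 ≤ X₂ t)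
    (hZ₁c : Continuous Z₁) (hZ₂c : Continuous Z₂)
    (heq₁ : ∀ t, Z₁ t = X₁ t + ∑ k ∈ Finset.Icc 1 N,
      (u k * Z₁ (t - l k) + v k * Z₂ (t - l k)))
    (heq₂ : ∀ t, Z₂ t = X₂ t + ∑ k ∈ Finset.Icc 1 N,
      (u k * Z₂ (t - l k) + v k * Z₁ (t - l k)))
    (hlim₁ : Tendsto Z₁ atBot (nhds 0)) (hlim₂ : Tendsto Z₂ atBot (nhds 0)) :
    ∀ t, 0 ≤ Z₁ t ∧ 0 ≤ Z₂ t := by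
  set g : ℝ → ℝ := fun t => min (Z₁ t) (Z₂ t)
  suffices ∀ t, 0 ≤ g t from fun t => le_min_iff.1 (this t)
  intro t₀
  by_contra! ht₀
  have hglim : Tendsto g atBot (𝓝 0) := by simpa using hlim₁.min hlim₂
  obtain ⟨s₀, hs₀, hmin⟩ := (hZ₁c.min hZ₂c).exists_isMinOn_Iic hglim ht₀
  obtain ⟨k₀, hk₀, hk₀min⟩ := (Finset.Icc 1 N).exists_min_image l
    (Finset.nonempty_of_sum_ne_zero (hsum ▸ one_ne_zero))
  have hfreq : ∃ᶠ s in atBot, s ≤ t₀ ∧ g s = g s₀ := by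
    refine frequently_atBot_of_forall_exists_le_sub (hl k₀ hk₀) ?_ ⟨hs₀, rfl⟩
    rintro s ⟨hs, hgs⟩
    obtain ⟨k, hk, hgk⟩ := renewal_exists_delay_min_eq hl hu hv hsum hX₁ hX₂ heq₁ heq₂
      (fun _ ht => hgs.trans_le (hmin ht)) hs
    exact ⟨s - l k, by linarith [hk₀min k hk], ⟨by linarith [hl k hk], hgk.trans hgs⟩⟩
  have hev : ∀ᶠ s in atBot, g s₀ < g s :=
    hglim.eventually (lt_mem_nhds ((hmin self_mem_Iic).trans_lt ht₀))
  obtain ⟨s, ⟨-, hgs⟩, hlt⟩ := (hfreq.and_eventually hev).exists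
  exact hlt.ne' hgs

theorem stmt_3 (N : ℕ) (l u v : ℕ → ℝ)
    (hl : ∀ k ∈ Finset.Icc 1 N, 0 < l k)
    (hu : ∀ k, 0 ≤ u k) (hv : ∀ k, 0 ≤ v k)
    (hsum : ∑ k ∈ Finset.Icc 1 N, (u k + v k) = 1)
    (X₁ X₂ Z₁ Z₂ : ℝ → ℝ)
    (hX₁c : Continuous X₁) (hX₂c : Continuous X₂)
    (hX₁ : ∀ t, 0 ≤ X₁ t) (hX₂ : ∀ t, 0 ≤ X₂ t)
    (hZ₁c : Continuous Z₁) (hZ₂c : Continuous Z₂)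
    (heq₁ : ∀ t, Z₁ t = X₁ t + ∑ k ∈ Finset.Icc 1 N,
      (u k * Z₁ (t - l k) + v k * Z₂ (t - l k)))
    (heq₂ : ∀ t, Z₂ t = X₂ t + ∑ k ∈ Finset.Icc 1 N,
      (u k * Z₂ (t - l k) + v k * Z₁ (t - l k)))
    (hlim₁ : Tendsto Z₁ atBot (nhds 0)) (hlim₂ : Tendsto Z₂ atBot (nhds 0)) :
    ∀ t, 0 ≤ Z₁ t ∧ 0 ≤ Z₂ t :=
  stmt_3_general N l u v hl hu hv hsum X₁ X₂ Z₁ Z₂ hX₁ hX₂ hZ₁c hZ₂c heq₁ heq₂ hlim₁ hlim₂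
end

section
/- Let l_1,...,l_N be positive reals and u_1,...,u_N, v_1,...,v_N nonnegative reals with ∑(u_k+v_k)=1. There exists a constant C > 0 such that for every Π ≥ 0 and every quadruple of continuous functions X_1, X_2, Z_1, Z_2 : ℝ → ℝ satisfying |X_j(t)| ≤ Π/(t²+1) for all t, the renewal system Z_j(t) = X_j(t) + ∑_k (u_k Z_j(t-l_k) + v_k Z_{3-j}(t-l_k)) and Z_j(t) → 0 as t → -∞, one has |Z_j(t)| ≤ C·Π for all t ∈ ℝ and j = 1,2. -/
/-!
Put `m t = max |Z₁ t| |Z₂ t|`. Since the weights `u_k + v_k` sum to one, the system gives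
`m t ≤ Π / (t² + 1) + ∑ (u_k + v_k) m (t - l_k)`, a renewal inequality with a single unknown.
With `L = min l_k`, the function `φ = ε + A (arctan + π/2)`, `A = Π (2 + 2L²) / L`, is a
supersolution: by the mean value theorem its increment over a delay `L` dominates
`Π / (t² + 1)`. As `m → 0` at `-∞`, `m ≤ φ` holds on a half-line `(-∞, T]`, and the renewal
inequality propagates it to `(-∞, T + nL]` for every `n`. Hence `m ≤ ε + π A` for all `ε > 0`.
-/

open Filter

theorem Finset.exists_pos_forall_le {ι : Type*} (S : Finset ι) (l : ι → ℝ)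
    (hl : ∀ k ∈ S, 0 < l k) : ∃ L, 0 < L ∧ ∀ k ∈ S, L ≤ l k := by
  rcases S.eq_empty_or_nonempty with rfl | hS
  · exact ⟨1, one_pos, by simp⟩
  · exact ⟨S.inf' hS l, (Finset.lt_inf'_iff hS).2 hl, fun k hk => S.inf'_le l hk⟩

theorem abs_sum_mul_add_mul_le {ι : Type*} (S : Finset ι) {u v a b : ι → ℝ}
    (hu : ∀ k ∈ S, 0 ≤ u k) (hv : ∀ k ∈ S, 0 ≤ v k) :
    |∑ k ∈ S, (u k * a k + v k * b k)| ≤ ∑ k ∈ S, (u k + v k) * max |a k| |b k| := by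
  refine (Finset.abs_sum_le_sum_abs _ _).trans (Finset.sum_le_sum fun k hk => ?_)
  calc |u k * a k + v k * b k| ≤ u k * |a k| + v k * |b k| := by
        simpa only [abs_mul, abs_of_nonneg (hu k hk), abs_of_nonneg (hv k hk)] using
          abs_add_le (u k * a k) (v k * b k)
    _ ≤ u k * max |a k| |b k| + v k * max |a k| |b k| := by
        gcongr
        exacts [hu k hk, le_max_left _ _, hv k hk, le_max_right _ _]
    _ = (u k + v k) * max |a k| |b k| := by ring

theorem arctan_sub_arctan_sub_ge {L : ℝ} (hL : 0 < L) (t : ℝ) :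
    L / ((2 + 2 * L ^ 2) * (t ^ 2 + 1)) ≤ Real.arctan t - Real.arctan (t - L) := by
  obtain ⟨c, ⟨hc₁, hc₂⟩, hc⟩ := exists_hasDerivAt_eq_slope Real.arctan (fun x => 1 / (1 + x ^ 2))
    (by linarith : t - L < t) Real.continuous_arctan.continuousOn
    (fun x _ => Real.hasDerivAt_arctan x)
  rw [sub_sub_cancel, eq_div_iff hL.ne', one_div_mul_eq_div] at hc
  -- `|c| ≤ |t| + L`, hence `c ^ 2 ≤ 2 t ^ 2 + 2 L ^ 2`
  have hc_sq : 1 + c ^ 2 ≤ (2 + 2 * L ^ 2) * (t ^ 2 + 1) := by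
    nlinarith [mul_nonneg (sub_nonneg.2 hc₂.le) (sub_nonneg.2 hc₁.le), sq_nonneg (t - L),
      sq_nonneg (t * L), sq_nonneg (t + L)]
  rw [← hc]
  gcongr

theorem div_sq_add_one_add_mul_arctan_sub_le {L : ℝ} (hL : 0 < L) {P : ℝ} (hP : 0 ≤ P) (t : ℝ) :
    P / (t ^ 2 + 1) + P * (2 + 2 * L ^ 2) / L * Real.arctan (t - L) ≤
      P * (2 + 2 * L ^ 2) / L * Real.arctan t := by
  have h := mul_le_mul_of_nonneg_left (arctan_sub_arctan_sub_ge hL t)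
    (by positivity : 0 ≤ P * (2 + 2 * L ^ 2) / L)
  have hP_eq : P * (2 + 2 * L ^ 2) / L * (L / ((2 + 2 * L ^ 2) * (t ^ 2 + 1))) =
      P / (t ^ 2 + 1) := by
    field_simp
  linarith

section Comparison

variable {ι : Type*} {S : Finset ι} {w l : ι → ℝ} {L : ℝ} {m f φ : ℝ → ℝ}

theorem le_of_renewal_le_of_le_on_past (hw : ∀ k ∈ S, 0 ≤ w k) (hw_sum : ∑ k ∈ S, w k = 1)
    (hlL : ∀ k ∈ S, L ≤ l k) (hφ : Monotone φ) (hsuper : ∀ t, f t + φ (t - L) ≤ φ t)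
    (hm : ∀ t, m t ≤ f t + ∑ k ∈ S, w k * m (t - l k)) {t : ℝ}
    (hpast : ∀ k ∈ S, m (t - l k) ≤ φ (t - l k)) : m t ≤ φ t :=
  calc m t ≤ f t + ∑ k ∈ S, w k * m (t - l k) := hm t
    _ ≤ f t + ∑ k ∈ S, w k * φ (t - L) := by
        gcongr with k hk
        · exact hw k hk
        · exact (hpast k hk).trans (hφ (by linarith [hlL k hk]))
    _ = f t + φ (t - L) := by rw [← Finset.sum_mul, hw_sum, one_mul]
    _ ≤ φ t := hsuper t

theorem le_of_renewal_le_of_eventually_le (hw : ∀ k ∈ S, 0 ≤ w k)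
    (hw_sum : ∑ k ∈ S, w k = 1) (hL : 0 < L) (hlL : ∀ k ∈ S, L ≤ l k) (hφ : Monotone φ)
    (hsuper : ∀ t, f t + φ (t - L) ≤ φ t) (hm : ∀ t, m t ≤ f t + ∑ k ∈ S, w k * m (t - l k))
    (hbot : ∀ᶠ t in atBot, m t ≤ φ t) (t : ℝ) : m t ≤ φ t := by
  obtain ⟨T, hT⟩ := eventually_atBot.1 hbot
  have h_induct : ∀ n : ℕ, ∀ s ≤ T + n * L, m s ≤ φ s := by
    intro n
    induction n with
    | zero => simpa using hT
    | succ n ih =>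
      intro s hs
      refine le_of_renewal_le_of_le_on_past hw hw_sum hlL hφ hsuper hm fun k hk => ih _ ?_
      push_cast at hs
      linarith [hlL k hk]
  obtain ⟨n, hn⟩ := Archimedean.arch (t - T) hL
  exact h_induct n t (by rw [nsmul_eq_mul] at hn; linarith)

end Comparison

theorem stmt_6 (N : ℕ) (l u v : ℕ → ℝ)
    (hl : ∀ k ∈ Finset.Icc 1 N, 0 < l k)
    (hu : ∀ k, 0 ≤ u k) (hv : ∀ k, 0 ≤ v k)
    (hsum : ∑ k ∈ Finset.Icc 1 N, (u k + v k) = 1) :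
    ∃ C : ℝ, 0 < C ∧
      ∀ (Pi0 : ℝ), 0 ≤ Pi0 →
      ∀ (X₁ X₂ Z₁ Z₂ : ℝ → ℝ),
        Continuous X₁ → Continuous X₂ → Continuous Z₁ → Continuous Z₂ →
        (∀ t, |X₁ t| ≤ Pi0 / (t ^ 2 + 1)) →
        (∀ t, |X₂ t| ≤ Pi0 / (t ^ 2 + 1)) →
        (∀ t, Z₁ t = X₁ t + ∑ k ∈ Finset.Icc 1 N,
          (u k * Z₁ (t - l k) + v k * Z₂ (t - l k))) →
        (∀ t, Z₂ t = X₂ t + ∑ k ∈ Finset.Icc 1 N,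
          (u k * Z₂ (t - l k) + v k * Z₁ (t - l k))) →
        Tendsto Z₁ atBot (nhds 0) → Tendsto Z₂ atBot (nhds 0) →
        ∀ t, |Z₁ t| ≤ C * Pi0 ∧ |Z₂ t| ≤ C * Pi0 := by
  obtain ⟨L, hL, hlL⟩ := (Finset.Icc 1 N).exists_pos_forall_le l hl
  refine ⟨Real.pi * (2 + 2 * L ^ 2) / L, by positivity, ?_⟩
  intro Pi0 hPi X₁ X₂ Z₁ Z₂ _ _ _ _ hX₁ hX₂ hZ₁ hZ₂ hZ₁_lim hZ₂_lim t
  set m : ℝ → ℝ := fun s => max |Z₁ s| |Z₂ s|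
  have hsum_le (s : ℝ) (a b : ℝ → ℝ) := abs_sum_mul_add_mul_le (Finset.Icc 1 N)
    (a := fun k => a (s - l k)) (b := fun k => b (s - l k)) (fun k _ => hu k) (fun k _ => hv k)
  have hm (s : ℝ) : m s ≤ Pi0 / (s ^ 2 + 1) +
      ∑ k ∈ Finset.Icc 1 N, (u k + v k) * m (s - l k) := by
    apply max_le
    · rw [hZ₁ s]
      exact (abs_add_le _ _).trans (add_le_add (hX₁ s) (hsum_le s Z₁ Z₂))
    · rw [hZ₂ s]
      simp only [m, max_comm |Z₁ _|]
      exact (abs_add_le _ _).trans (add_le_add (hX₂ s) (hsum_le s Z₂ Z₁))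
  have hm_lim : Tendsto m atBot (nhds 0) := by
    simpa using hZ₁_lim.abs.max hZ₂_lim.abs
  set A := Pi0 * (2 + 2 * L ^ 2) / L with hA_def
  have hA : 0 ≤ A := by positivity
  have hm_le : m t ≤ Real.pi * (2 + 2 * L ^ 2) / L * Pi0 := by
    refine le_of_forall_pos_le_add fun ε hε => ?_
    have hφ_mono : Monotone fun s => ε + A * (Real.arctan s + Real.pi / 2) :=
      ((Real.arctan_strictMono.monotone.add_const _).const_mul hA).const_add ε
    have hbot : ∀ᶠ s in atBot, m s ≤ ε + A * (Real.arctan s + Real.pi / 2) := by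
      filter_upwards [(tendsto_order.1 hm_lim).2 ε hε] with s hs
      nlinarith [Real.neg_pi_div_two_lt_arctan s]
    calc m t ≤ ε + A * (Real.arctan t + Real.pi / 2) :=
          le_of_renewal_le_of_eventually_le (fun k _ => add_nonneg (hu k) (hv k)) hsum hL hlL
            hφ_mono (fun s => by linarith [div_sq_add_one_add_mul_arctan_sub_le hL hPi s]) hm
            hbot t
      _ ≤ ε + A * Real.pi := by
          gcongr
          linarith [Real.arctan_lt_pi_div_two t]
      _ = Real.pi * (2 + 2 * L ^ 2) / L * Pi0 + ε := by rw [hA_def]; ring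
  exact ⟨(le_max_left _ _).trans hm_le, (le_max_right _ _).trans hm_le⟩
end

section
/- Let l_1,...,l_N be positive reals and u_1,...,u_N, v_1,...,v_N nonnegative reals with ∑(u_k+v_k)=1. If continuous functions Z_1, Z_2 satisfy the homogeneous system Z_j(t) = ∑_{k=1}^N (u_k Z_j(t-l_k) + v_k Z_{3-j}(t-l_k)) for all t and Z_j(t) → 0 as t → -∞, then Z_1 = Z_2 = 0 identically. -/
/-!
The function `f = max |Z₁| |Z₂|` is a subsolution of the scalar renewal equation
`f t ≤ ∑ (u k + v k) f (t - l k)`, continuous and tending to `0` at `-∞`.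
Such an `f` is nonpositive: if `f t > 0`, take `T ≤ t` beyond which `f < f t`, and let `s₀` be the
leftmost maximum of `f` on `[T, t]`. Every delayed value `f (s₀ - l k)` is then strictly below
`f s₀`, so their weighted average is too, contradicting the subsolution inequality at `s₀`.
-/

open Filter Topology

theorem abs_sum_le_sum_mul_max_abs {ι : Type*} (s : Finset ι) {u v : ι → ℝ}
    (hu : ∀ k, 0 ≤ u k) (hv : ∀ k, 0 ≤ v k) (a b : ι → ℝ) :
    |∑ k ∈ s, (u k * a k + v k * b k)| ≤ ∑ k ∈ s, (u k + v k) * max |a k| |b k| := by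
  refine (Finset.abs_sum_le_sum_abs _ _).trans (Finset.sum_le_sum fun k _ => ?_)
  calc |u k * a k + v k * b k| ≤ u k * |a k| + v k * |b k| := by
        simpa only [abs_mul, abs_of_nonneg (hu k), abs_of_nonneg (hv k)] using
          abs_add_le (u k * a k) (v k * b k)
    _ ≤ u k * max |a k| |b k| + v k * max |a k| |b k| :=
        add_le_add (mul_le_mul_of_nonneg_left (le_max_left _ _) (hu k))
          (mul_le_mul_of_nonneg_left (le_max_right _ _) (hv k))
    _ = (u k + v k) * max |a k| |b k| := (add_mul _ _ _).symm

theorem sum_mul_lt_of_forall_lt {ι : Type*} {s : Finset ι} {w g : ι → ℝ} {M : ℝ}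
    (hw : ∀ k ∈ s, 0 ≤ w k) (hw₁ : ∑ k ∈ s, w k = 1) (hg : ∀ k ∈ s, g k < M) :
    ∑ k ∈ s, w k * g k < M := by
  obtain ⟨k₀, hk₀, hw₀⟩ : ∃ k ∈ s, 0 < w k :=
    Finset.exists_lt_of_sum_lt (f := 0) (by simp [hw₁])
  calc ∑ k ∈ s, w k * g k < ∑ k ∈ s, w k * M :=
        Finset.sum_lt_sum (fun k hk => mul_le_mul_of_nonneg_left (hg k hk).le (hw k hk))
          ⟨k₀, hk₀, mul_lt_mul_of_pos_left (hg k₀ hk₀) hw₀⟩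
    _ = M := by rw [← Finset.sum_mul, hw₁, one_mul]

theorem exists_leftmost_isMaxOn_Icc {f : ℝ → ℝ} (hf : Continuous f) {a b : ℝ} (hab : a ≤ b) :
    ∃ x ∈ Set.Icc a b, IsMaxOn f (Set.Icc a b) x ∧ ∀ y ∈ Set.Icc a b, y < x → f y < f x := by
  obtain ⟨m, hm, hmax⟩ := isCompact_Icc.exists_isMaxOn (Set.nonempty_Icc.2 hab) hf.continuousOn
  set A := Set.Icc a b ∩ f ⁻¹' Set.Ici (f m)
  have hA : IsClosed A := isClosed_Icc.inter (isClosed_Ici.preimage hf)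
  have hAbdd : BddBelow A := bddBelow_Icc.mono Set.inter_subset_left
  obtain ⟨hx, hfx⟩ : sInf A ∈ A := hA.csInf_mem ⟨m, hm, le_refl (f m)⟩ hAbdd
  have hxm : f (sInf A) = f m := le_antisymm (hmax hx) hfx
  refine ⟨sInf A, hx, fun y hy => hxm ▸ hmax hy, fun y hy hyx => ?_⟩
  refine lt_of_le_of_ne (hxm ▸ hmax hy) fun hfy => hyx.not_ge (csInf_le hAbdd ⟨hy, ?_⟩)
  exact (hfy.trans hxm).ge

theorem nonpos_of_le_sum_mul_delay {ι : Type*} {s : Finset ι} {w l : ι → ℝ}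
    (hw : ∀ k ∈ s, 0 ≤ w k) (hw₁ : ∑ k ∈ s, w k = 1) (hl : ∀ k ∈ s, 0 < l k)
    {f : ℝ → ℝ} (hf : Continuous f) (hlim : Tendsto f atBot (𝓝 0))
    (hsub : ∀ t, f t ≤ ∑ k ∈ s, w k * f (t - l k)) (t : ℝ) : f t ≤ 0 := by
  by_contra! hft
  obtain ⟨T₀, hT₀⟩ := eventually_atBot.1 ((tendsto_order.1 hlim).2 _ hft)
  have hT : min T₀ t ≤ t := min_le_right _ _
  obtain ⟨x, hx, hmax, hleft⟩ := exists_leftmost_isMaxOn_Icc hf hT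
  have hdelay : ∀ k ∈ s, f (x - l k) < f x := by
    intro k hk
    have hxk : x - l k < x := sub_lt_self x (hl k hk)
    rcases lt_or_ge (x - l k) (min T₀ t) with hlt | hge
    · exact (hT₀ _ (hlt.le.trans (min_le_left _ _))).trans_le (hmax ⟨hT, le_rfl⟩)
    · exact hleft _ ⟨hge, hxk.le.trans hx.2⟩ hxk
  exact (hsub x).not_gt (sum_mul_lt_of_forall_lt hw hw₁ hdelay)

theorem stmt_7 (N : ℕ) (l u v : ℕ → ℝ)
    (hl : ∀ k ∈ Finset.Icc 1 N, 0 < l k)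
    (hu : ∀ k, 0 ≤ u k) (hv : ∀ k, 0 ≤ v k)
    (hsum : ∑ k ∈ Finset.Icc 1 N, (u k + v k) = 1)
    (Z₁ Z₂ : ℝ → ℝ) (hZ₁c : Continuous Z₁) (hZ₂c : Continuous Z₂)
    (heq₁ : ∀ t, Z₁ t = ∑ k ∈ Finset.Icc 1 N,
      (u k * Z₁ (t - l k) + v k * Z₂ (t - l k)))
    (heq₂ : ∀ t, Z₂ t = ∑ k ∈ Finset.Icc 1 N,
      (u k * Z₂ (t - l k) + v k * Z₁ (t - l k)))
    (hlim₁ : Tendsto Z₁ atBot (nhds 0)) (hlim₂ : Tendsto Z₂ atBot (nhds 0)) :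
    ∀ t, Z₁ t = 0 ∧ Z₂ t = 0 := by
  set f : ℝ → ℝ := fun t => max |Z₁ t| |Z₂ t|
  have hsub : ∀ t, f t ≤ ∑ k ∈ Finset.Icc 1 N, (u k + v k) * f (t - l k) := by
    intro t
    refine max_le ?_ ?_
    · rw [heq₁ t]
      exact abs_sum_le_sum_mul_max_abs _ hu hv _ _
    · rw [heq₂ t]
      simpa only [f, max_comm |Z₁ _|] using abs_sum_le_sum_mul_max_abs _ hu hv
        (fun k => Z₂ (t - l k)) (fun k => Z₁ (t - l k))
  have hflim : Tendsto f atBot (𝓝 0) := by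
    simpa using hlim₁.abs.max hlim₂.abs
  have hf : ∀ t, f t ≤ 0 := nonpos_of_le_sum_mul_delay (fun k _ => add_nonneg (hu k) (hv k))
    hsum hl (hZ₁c.abs.max hZ₂c.abs) hflim hsub
  exact fun t => ⟨abs_nonpos_iff.1 ((le_max_left _ _).trans (hf t)),
    abs_nonpos_iff.1 ((le_max_right _ _).trans (hf t))⟩
end

section
/- Let u_1,...,u_N, v_1,...,v_N be nonnegative reals with ∑(u_k+v_k)=1 and ∑ v_k > 0, l_1,...,l_N positive reals, and J = ∑_k (u_k+v_k) l_k. Let ζ_1, ζ_2 be reals with ζ_1+ζ_2 ≠ 0. Fix any continuous Z_1 : ℝ → ℝ that equals 0 on a neighborhood of -∞ and equals (ζ_1+ζ_2)/(2J) on a neighborhood of +∞, and set Z_2(t) = Z_1(t-τ) where τ = J(ζ_1-ζ_2)/((ζ_1+ζ_2)·∑_k v_k). Define X_j(t) = Z_j(t) - ∑_k (u_k Z_j(t-l_k) + v_k Z_{3-j}(t-l_k)). Then X_1 and X_2 have compact support, ∫_ℝ X_1 dμ = ζ_1 and ∫_ℝ X_2 dμ = ζ_2. -/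
open MeasureTheory

/-!
Write `Δ_s f = f - f (· - s)`. Because `∑ (u_k + v_k) = 1` and `Z₂ = Z₁ (· - τ)`,
`X₁ = ∑ u_k Δ_{l_k} Z₁ + ∑ v_k Δ_{l_k + τ} Z₁`, and `X₂` is the same combination with `τ`
replaced by `-τ`, translated by `τ`. If `f` is continuous, vanishes near `-∞` and equals `c`
near `+∞`, then `Δ_s f` has compact support and integral `s c`. Hence, with `V = ∑ v_k` and
`c = (ζ₁ + ζ₂) / (2J)`, `∫ X₁ = (J + τV) c` and `∫ X₂ = (J - τV) c`, which the choice of `τ`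
makes `ζ₁` and `ζ₂`.
-/

section StepDifferences

variable {f : ℝ → ℝ} {a b c : ℝ}

theorem support_sub_comp_sub_subset (h0 : ∀ t ≤ a, f t = 0) (hc : ∀ t ≥ b, f t = c) (s : ℝ) :
    Function.support (fun t => f t - f (t - s)) ⊆ Set.Ioc (a - |s|) (b + |s|) := by
  obtain ⟨hs_lo, hs_hi⟩ := abs_le.mp (le_refl |s|)
  intro t ht
  by_contra hout
  rcases not_and_or.mp hout with h | h
  · exact ht (by simp only [h0 t (by linarith), h0 (t - s) (by linarith), sub_self])
  · exact ht (by simp only [hc t (by linarith), hc (t - s) (by linarith), sub_self])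

theorem hasCompactSupport_sub_comp_sub (h0 : ∀ t ≤ a, f t = 0) (hc : ∀ t ≥ b, f t = c)
    (s : ℝ) : HasCompactSupport fun t => f t - f (t - s) :=
  .intro isCompact_Icc fun _ ht => Function.notMem_support.mp fun h =>
    ht (Set.Ioc_subset_Icc_self (support_sub_comp_sub_subset h0 hc s h))

theorem integrable_sub_comp_sub (hf : Continuous f) (h0 : ∀ t ≤ a, f t = 0)
    (hc : ∀ t ≥ b, f t = c) (s : ℝ) : Integrable fun t => f t - f (t - s) :=
  Continuous.integrable_of_hasCompactSupport (by fun_prop) (hasCompactSupport_sub_comp_sub h0 hc s)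

theorem integral_sub_comp_sub (hf : Continuous f) (h0 : ∀ t ≤ a, f t = 0)
    (hc : ∀ t ≥ b, f t = c) (s : ℝ) : ∫ t, (f t - f (t - s)) = s * c := by
  obtain ⟨hs_lo, hs_hi⟩ := abs_le.mp (le_refl |s|)
  have hB : ∫ t in b + |s| - s..b + |s|, f t = s * c := by
    rw [intervalIntegral.integral_congr (g := fun _ => c), intervalIntegral.integral_const,
      smul_eq_mul, sub_sub_cancel]
    intro t ht
    exact hc t ((Set.mem_uIcc.mp ht).elim (fun h => by linarith [h.1]) fun h => by linarith [h.1])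
  have hA : ∫ t in a - |s| - s..a - |s|, f t = 0 := by
    rw [intervalIntegral.integral_congr (g := fun _ => 0), intervalIntegral.integral_zero]
    intro t ht
    exact h0 t ((Set.mem_uIcc.mp ht).elim (fun h => by linarith [h.2]) fun h => by linarith [h.2])
  rw [← intervalIntegral.integral_eq_integral_of_support_subset
      (support_sub_comp_sub_subset h0 hc s),
    intervalIntegral.integral_sub (hf.intervalIntegrable _ _)
      (by apply Continuous.intervalIntegrable; fun_prop),
    intervalIntegral.integral_comp_sub_right,
    intervalIntegral.integral_interval_sub_interval_comm' (hf.intervalIntegrable _ _)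
      (hf.intervalIntegrable _ _) (hf.intervalIntegrable _ _), hA, hB, sub_zero]

variable {ι : Type*} (S : Finset ι) (w p : ι → ℝ)

theorem hasCompactSupport_sum_mul_sub_comp_sub (h0 : ∀ t ≤ a, f t = 0)
    (hc : ∀ t ≥ b, f t = c) :
    HasCompactSupport fun t => ∑ k ∈ S, w k * (f t - f (t - p k)) := by
  rw [← Finset.sum_fn]
  exact .finset_sum fun k _ => (hasCompactSupport_sub_comp_sub h0 hc (p k)).mul_left

theorem integrable_sum_mul_sub_comp_sub (hf : Continuous f) (h0 : ∀ t ≤ a, f t = 0)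
    (hc : ∀ t ≥ b, f t = c) :
    Integrable fun t => ∑ k ∈ S, w k * (f t - f (t - p k)) :=
  integrable_finsetSum S fun k _ => (integrable_sub_comp_sub hf h0 hc (p k)).const_mul (w k)

theorem integral_sum_mul_sub_comp_sub (hf : Continuous f) (h0 : ∀ t ≤ a, f t = 0)
    (hc : ∀ t ≥ b, f t = c) :
    ∫ t, ∑ k ∈ S, w k * (f t - f (t - p k)) = (∑ k ∈ S, w k * p k) * c := by
  simp only [integral_finsetSum S fun k _ =>
      (integrable_sub_comp_sub hf h0 hc (p k)).const_mul (w k), integral_const_mul,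
    integral_sub_comp_sub hf h0 hc, Finset.sum_mul, mul_assoc]

end StepDifferences

section WeightedShiftDiff

variable {ι : Type*}

def weightedShiftDiff (f : ℝ → ℝ) (S : Finset ι) (u v l : ι → ℝ) (σ t : ℝ) : ℝ :=
  ∑ k ∈ S, u k * (f t - f (t - l k)) + ∑ k ∈ S, v k * (f t - f (t - (l k + σ)))

variable {f : ℝ → ℝ} {a b c : ℝ} (S : Finset ι) (u v l : ι → ℝ) (σ : ℝ)

theorem hasCompactSupport_weightedShiftDiff (h0 : ∀ t ≤ a, f t = 0) (hc : ∀ t ≥ b, f t = c) :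
    HasCompactSupport (weightedShiftDiff f S u v l σ) :=
  (hasCompactSupport_sum_mul_sub_comp_sub _ _ _ h0 hc).add
    (hasCompactSupport_sum_mul_sub_comp_sub _ _ _ h0 hc)

theorem integral_weightedShiftDiff (hf : Continuous f) (h0 : ∀ t ≤ a, f t = 0)
    (hc : ∀ t ≥ b, f t = c) :
    ∫ t, weightedShiftDiff f S u v l σ t =
      (∑ k ∈ S, (u k + v k) * l k + σ * ∑ k ∈ S, v k) * c := by
  unfold weightedShiftDiff
  rw [integral_add (integrable_sum_mul_sub_comp_sub _ _ _ hf h0 hc)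
      (integrable_sum_mul_sub_comp_sub _ _ _ hf h0 hc),
    integral_sum_mul_sub_comp_sub _ _ _ hf h0 hc, integral_sum_mul_sub_comp_sub _ _ _ hf h0 hc,
    ← add_mul]
  simp only [mul_add, add_mul, Finset.sum_add_distrib, ← Finset.sum_mul]
  ring

end WeightedShiftDiff

theorem sub_sum_eq_sum_mul_sub_add_sum_mul_sub {R ι : Type*} [CommRing R] {S : Finset ι}
    {u v : ι → R} (hsum : ∑ k ∈ S, (u k + v k) = 1) (g : R → R) (p q : ι → R) (t : R) :
    g t - ∑ k ∈ S, (u k * g (t - p k) + v k * g (t - q k)) =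
      ∑ k ∈ S, u k * (g t - g (t - p k)) + ∑ k ∈ S, v k * (g t - g (t - q k)) := by
  rw [← Finset.sum_add_distrib]
  conv_lhs => rw [← one_mul (g t), ← hsum, Finset.sum_mul, ← Finset.sum_sub_distrib]
  exact Finset.sum_congr rfl fun k _ => by ring

theorem sum_add_mul_pos {ι : Type*} {S : Finset ι} {u v l : ι → ℝ} (hl : ∀ k ∈ S, 0 < l k)
    (hu : ∀ k, 0 ≤ u k) (hv : ∀ k, 0 ≤ v k) (hvpos : 0 < ∑ k ∈ S, v k) :
    0 < ∑ k ∈ S, (u k + v k) * l k := by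
  obtain ⟨k₀, hk₀, hvk₀⟩ := Finset.exists_lt_of_sum_lt (f := fun _ => (0 : ℝ)) (g := v)
    (by simpa using hvpos)
  exact Finset.sum_pos' (fun k hk => mul_nonneg (add_nonneg (hu k) (hv k)) (hl k hk).le)
    ⟨k₀, hk₀, mul_pos (by linarith [hu k₀]) (hl k₀ hk₀)⟩

theorem stmt_12 (N : ℕ) (l u v : ℕ → ℝ)
    (hl : ∀ k ∈ Finset.Icc 1 N, 0 < l k)
    (hu : ∀ k, 0 ≤ u k) (hv : ∀ k, 0 ≤ v k)
    (hsum : ∑ k ∈ Finset.Icc 1 N, (u k + v k) = 1)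
    (hvpos : 0 < ∑ k ∈ Finset.Icc 1 N, v k)
    (J : ℝ) (hJ : J = ∑ k ∈ Finset.Icc 1 N, (u k + v k) * l k)
    (ζ₁ ζ₂ : ℝ) (hζ : ζ₁ + ζ₂ ≠ 0)
    (τ : ℝ) (hτ : τ = J * (ζ₁ - ζ₂) / ((ζ₁ + ζ₂) * ∑ k ∈ Finset.Icc 1 N, v k))
    (Z₁ Z₂ : ℝ → ℝ) (hZ₁c : Continuous Z₁)
    (ha : ∃ a : ℝ, ∀ t ≤ a, Z₁ t = 0)
    (hb : ∃ b : ℝ, ∀ t ≥ b, Z₁ t = (ζ₁ + ζ₂) / (2 * J))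
    (hZ₂ : ∀ t, Z₂ t = Z₁ (t - τ))
    (X₁ X₂ : ℝ → ℝ)
    (hX₁ : ∀ t, X₁ t = Z₁ t - ∑ k ∈ Finset.Icc 1 N,
      (u k * Z₁ (t - l k) + v k * Z₂ (t - l k)))
    (hX₂ : ∀ t, X₂ t = Z₂ t - ∑ k ∈ Finset.Icc 1 N,
      (u k * Z₂ (t - l k) + v k * Z₁ (t - l k))) :
    HasCompactSupport X₁ ∧ HasCompactSupport X₂ ∧
    (∫ t : ℝ, X₁ t) = ζ₁ ∧ (∫ t : ℝ, X₂ t) = ζ₂ := by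
  obtain ⟨a, ha⟩ := ha
  obtain ⟨b, hb⟩ := hb
  have hJpos : 0 < J := hJ ▸ sum_add_mul_pos hl hu hv hvpos
  have hX₁F : X₁ = weightedShiftDiff Z₁ (Finset.Icc 1 N) u v l τ := funext fun t => by
    simp only [hX₁, hZ₂, sub_sub]
    exact sub_sum_eq_sum_mul_sub_add_sum_mul_sub hsum Z₁ l (fun k => l k + τ) t
  have hX₂F : X₂ = weightedShiftDiff Z₁ (Finset.Icc 1 N) u v l (-τ) ∘ Homeomorph.subRight τ :=
    funext fun t => by
      have hsplit := sub_sum_eq_sum_mul_sub_add_sum_mul_sub hsum Z₁ l (fun k => l k + -τ) (t - τ)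
      simp only [hX₂, hZ₂, Function.comp_apply, Homeomorph.subRight_apply, weightedShiftDiff]
      convert hsplit using 6 <;> ring
  refine ⟨hX₁F ▸ hasCompactSupport_weightedShiftDiff _ _ _ _ _ ha hb,
    hX₂F ▸ (hasCompactSupport_weightedShiftDiff _ _ _ _ _ ha hb).comp_homeomorph _, ?_, ?_⟩
  · rw [hX₁F, integral_weightedShiftDiff _ _ _ _ _ hZ₁c ha hb, ← hJ, hτ]
    field_simp
    ring
  · simp only [hX₂F, Function.comp_apply, Homeomorph.subRight_apply, integral_sub_right_eq_self,
      integral_weightedShiftDiff _ _ _ _ _ hZ₁c ha hb, ← hJ, hτ]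
    field_simp
    ring
end
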